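/- Let k_Σ be a positive semidefinite kernel on Σ, and let C_d ≥ 0 and C_hv ∈ ℝ. Then the path kernel k_p (defined recursively by k_p(s,t) = 0 if s or t empty, and k_p(s,t) = k_Σ(s₁,t₁) + C_hv·k_p(s_{2:},t) + C_hv·k_p(s,t_{2:}) + C_d·k_p(s_{2:},t_{2:}) otherwise) is a positive semidefinite kernel on the set of finite sequences over Σ. -/

import Mathlib

/-!
Unrolling the recursion gives `k_p(s, t) = ∑ i j, w(i, j) k_Σ(s_i, t_j)`, where `w` solves the
scalar recurrence `w(i+1, j+1) = C_hv w(i, j+1) + C_hv w(i+1, j) + C_d w(i, j)` with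
`w(i, 0) = C_hv^i` and `w(0, j) = C_hv^j`. Its generating function `1 / (1 - C_hv x - C_hv y - C_d x y)`
factors as `∑ k, E^k x^k y^k / ((1 - C_hv x)(1 - C_hv y))^(k+1)` with `E = C_d + C_hv^2`, so
`w(i, j) = ∑ k, E^k φ_k(i) φ_k(j)` with `φ_k(i) = C_hv^(i-k) (i choose k)`. Hence `k_p` is a combination
with coefficients `E^k ≥ 0` of the kernels `∑ i j, φ_k(i) φ_k(j) k_Σ(s_i, t_j)`, each of which is PSD
as the kernel of the feature map `s ↦ ∑ i, φ_k(i) Φ(s_i)`.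
-/

def IsPSDKernel {X : Type*} (k : X → X → ℝ) : Prop :=
  ∀ (n : ℕ) (x : Fin n → X) (c : Fin n → ℝ),
    0 ≤ ∑ i : Fin n, ∑ j : Fin n, c i * c j * k (x i) (x j)

/-- The Path kernel, defined recursively (Eq. 4). -/
noncomputable def pathKernel {A : Type*} (kA : A → A → ℝ) (Chv Cd : ℝ) :
    List A → List A → ℝ
  | [], _ => 0
  | _ :: _, [] => 0
  | a :: s, b :: t =>
      kA a b + Chv * pathKernel kA Chv Cd s (b :: t)
        + Chv * pathKernel kA Chv Cd (a :: s) t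
        + Cd * pathKernel kA Chv Cd s t
termination_by x y => x.length + y.length
decreasing_by all_goals (simp [List.length]; try omega)

open Finset

namespace IsPSDKernel

variable {X : Type*} {k : X → X → ℝ}

theorem sum_fintype (hk : IsPSDKernel k) {ι : Type*} [Fintype ι] (x : ι → X) (c : ι → ℝ) :
    0 ≤ ∑ i, ∑ j, c i * c j * k (x i) (x j) := by
  let e := (Fintype.equivFin ι).symm
  rw [← e.sum_comp]
  refine (hk _ (x ∘ e) (c ∘ e)).trans_eq (sum_congr rfl fun i _ => ?_)
  exact e.sum_comp fun j => c (e i) * c j * k (x (e i)) (x j)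

theorem comp (hk : IsPSDKernel k) {Y : Type*} (f : Y → X) :
    IsPSDKernel fun y y' => k (f y) (f y') :=
  fun _ y c => hk _ (f ∘ y) c

theorem const_mul (hk : IsPSDKernel k) {a : ℝ} (ha : 0 ≤ a) :
    IsPSDKernel fun x y => a * k x y := by
  intro n x c
  have := mul_nonneg ha (hk n x c)
  simpa only [mul_sum, mul_left_comm a] using this

theorem sum {ι : Type*} (s : Finset ι) {k : ι → X → X → ℝ} (hk : ∀ i ∈ s, IsPSDKernel (k i)) :
    IsPSDKernel fun x y => ∑ i ∈ s, k i x y := by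
  intro n x c
  simp only [mul_sum]
  rw [sum_congr rfl fun a _ => sum_comm, sum_comm]
  exact sum_nonneg fun i hi => hk i hi n x c

theorem of_forall_sublevel (μ : X → ℕ)
    (h : ∀ N, IsPSDKernel fun x y : {x // μ x ≤ N} => k x y) : IsPSDKernel k := by
  intro n x c
  obtain ⟨N, hN⟩ := (univ.image (μ ∘ x)).exists_le
  exact h N n (fun i => ⟨x i, hN _ (mem_image_of_mem _ (mem_univ i))⟩) c

end IsPSDKernel

def weightedSumKernel {A : Type*} (k : A → A → ℝ) (f : ℕ → ℝ) (s t : List A) : ℝ :=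
  ∑ i : Fin s.length, ∑ j : Fin t.length, f i * f j * k s[i] t[j]

theorem IsPSDKernel.weightedSumKernel {A : Type*} {k : A → A → ℝ} (hk : IsPSDKernel k)
    (f : ℕ → ℝ) : IsPSDKernel (weightedSumKernel k f) := by
  intro n x c
  have := hk.sum_fintype (fun p : (a : Fin n) × Fin (x a).length => (x p.1)[p.2])
    (fun p => c p.1 * f p.2)
  simp only [Fintype.sum_sigma] at this
  refine this.trans_eq (sum_congr rfl fun a _ => ?_)
  rw [sum_comm]
  refine sum_congr rfl fun b _ => ?_
  simp only [_root_.weightedSumKernel, mul_sum]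
  refine sum_congr rfl fun i _ => sum_congr rfl fun j _ => ?_
  ring

section PathCoefficients

variable (Chv Cd : ℝ)

def pathFeature (k i : ℕ) : ℝ := Chv ^ (i - k) * i.choose k

def pathCoeff (i j : ℕ) : ℝ :=
  ∑ k ∈ range (i + 1), (Cd + Chv ^ 2) ^ k * pathFeature Chv k i * pathFeature Chv k j

variable {Chv} in
theorem pathFeature_eq_zero_of_lt {k i : ℕ} (h : i < k) : pathFeature Chv k i = 0 := by
  simp [pathFeature, Nat.choose_eq_zero_of_lt h]

theorem pathFeature_zero (i : ℕ) : pathFeature Chv 0 i = Chv ^ i := by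
  simp [pathFeature]

theorem pathFeature_succ_succ (k i : ℕ) :
    pathFeature Chv (k + 1) (i + 1) = Chv * pathFeature Chv (k + 1) i + pathFeature Chv k i := by
  rcases Nat.lt_or_ge k i with h | h
  · obtain ⟨m, rfl⟩ := Nat.exists_eq_add_of_lt h
    simp only [pathFeature, Nat.choose_succ_succ, Nat.cast_add,
      show k + m + 1 + 1 - (k + 1) = m + 1 by omega, show k + m + 1 - (k + 1) = m by omega,
      show k + m + 1 - k = m + 1 by omega]
    ring
  · simp only [pathFeature, Nat.choose_succ_succ, Nat.choose_eq_zero_of_lt (Nat.lt_succ_of_le h),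
      show i + 1 - (k + 1) = i - k by omega, Nat.cast_zero, add_zero, mul_zero, zero_add]

variable {Cd} in
theorem pathCoeff_eq_sum_range {i N : ℕ} (j : ℕ) (h : i < N) :
    pathCoeff Chv Cd i j =
      ∑ k ∈ range N, (Cd + Chv ^ 2) ^ k * pathFeature Chv k i * pathFeature Chv k j := by
  refine sum_subset (range_subset_range.2 h) fun k _ hki => ?_
  rw [pathFeature_eq_zero_of_lt (by simpa using hki), mul_zero, zero_mul]

theorem pathCoeff_zero_left (j : ℕ) : pathCoeff Chv Cd 0 j = Chv ^ j := by
  simp [pathCoeff, pathFeature_zero]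

theorem pathCoeff_zero_right (i : ℕ) : pathCoeff Chv Cd i 0 = Chv ^ i := by
  have vanish : ∀ k ∈ range (i + 1), k ≠ 0 →
      (Cd + Chv ^ 2) ^ k * pathFeature Chv k i * pathFeature Chv k 0 = 0 := fun k _ hk => by
    rw [pathFeature_eq_zero_of_lt (Nat.pos_of_ne_zero hk), mul_zero]
  simp [pathCoeff, sum_eq_single 0 vanish, pathFeature_zero]

theorem pathCoeff_succ_succ (i j : ℕ) :
    pathCoeff Chv Cd (i + 1) (j + 1) = Chv * pathCoeff Chv Cd i (j + 1)
      + Chv * pathCoeff Chv Cd (i + 1) j + Cd * pathCoeff Chv Cd i j := by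
  let term (k i' j' : ℕ) : ℝ := (Cd + Chv ^ 2) ^ k * pathFeature Chv k i' * pathFeature Chv k j'
  let g : ℕ → ℝ
    | 0 => 0
    | k + 1 => (Cd + Chv ^ 2) ^ (k + 1) * pathFeature Chv k i * pathFeature Chv k j
  -- Pascal's rule for `pathFeature` makes the summands telescope.
  have telescoping : ∀ k, term k (i + 1) (j + 1)
      - (Chv * term k i (j + 1) + Chv * term k (i + 1) j + Cd * term k i j) = g k - g (k + 1) := by
    rintro (_ | k)
    · simp only [term, g, pathFeature_zero]; ring
    · simp only [term, g, pathFeature_succ_succ]; ring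
  rw [← sub_eq_zero]
  simp only [pathCoeff_eq_sum_range Chv _ (show i + 1 < i + 2 by omega),
    pathCoeff_eq_sum_range Chv _ (show i < i + 2 by omega), mul_sum, ← sum_add_distrib,
    ← sum_sub_distrib]
  rw [sum_congr rfl fun k _ => telescoping k, sum_range_sub']
  simp [g, pathFeature_eq_zero_of_lt (Nat.lt_succ_self i)]

end PathCoefficients

theorem pathKernel_eq_sum_pathCoeff {A : Type*} (kA : A → A → ℝ) (Chv Cd : ℝ) :
    ∀ s t : List A, pathKernel kA Chv Cd s t =
      ∑ i : Fin s.length, ∑ j : Fin t.length, pathCoeff Chv Cd i j * kA s[i] t[j]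
  | [], _ => by simp [pathKernel]
  | _ :: _, [] => by simp [pathKernel]
  | a :: s, b :: t => by
    rw [pathKernel, pathKernel_eq_sum_pathCoeff kA Chv Cd s (b :: t),
      pathKernel_eq_sum_pathCoeff kA Chv Cd (a :: s) t, pathKernel_eq_sum_pathCoeff kA Chv Cd s t]
    simp only [List.length_cons, Fin.sum_univ_succ, Fin.val_zero, Fin.val_succ,
      List.getElem_cons_zero, List.getElem_cons_succ, Fin.getElem_fin, pathCoeff_succ_succ,
      pathCoeff_zero_left, pathCoeff_zero_right, pow_zero, pow_succ', add_mul, mul_add, mul_assoc,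
      sum_add_distrib, mul_sum]
    ring
termination_by s t => s.length + t.length

theorem pathKernel_eq_sum_weightedSumKernel {A : Type*} (kA : A → A → ℝ) (Chv Cd : ℝ) {N : ℕ}
    {s : List A} (hs : s.length ≤ N) (t : List A) :
    pathKernel kA Chv Cd s t =
      ∑ k ∈ range N, (Cd + Chv ^ 2) ^ k * weightedSumKernel kA (pathFeature Chv k) s t := by
  rw [pathKernel_eq_sum_pathCoeff]
  calc _ = ∑ i : Fin s.length, ∑ j : Fin t.length, ∑ k ∈ range N,
        (Cd + Chv ^ 2) ^ k * (pathFeature Chv k i * pathFeature Chv k j * kA s[i] t[j]) := by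
        refine sum_congr rfl fun i _ => sum_congr rfl fun j _ => ?_
        rw [pathCoeff_eq_sum_range Chv j (i.2.trans_le hs), sum_mul]
        exact sum_congr rfl fun k _ => by ring
    _ = _ := by
        simp only [weightedSumKernel, mul_sum]
        rw [sum_congr rfl fun i _ => sum_comm, sum_comm]

/-- Corollary 2 (main result): the Path kernel is positive semidefinite for
any PSD symbol kernel `k_Σ`, any `C_d ≥ 0` and any `C_hv ∈ ℝ`. -/
theorem pathKernel_is_psd {A : Type*} (kA : A → A → ℝ) (hA : IsPSDKernel kA)
    (Chv Cd : ℝ) (hCd : 0 ≤ Cd) :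
    IsPSDKernel (pathKernel kA Chv Cd) := by
  refine IsPSDKernel.of_forall_sublevel List.length fun N => ?_
  have hsum : (fun s t : {s : List A // s.length ≤ N} => pathKernel kA Chv Cd s t) =
      fun s t : {s : List A // s.length ≤ N} =>
        ∑ k ∈ range N, (Cd + Chv ^ 2) ^ k * weightedSumKernel kA (pathFeature Chv k) s t :=
    funext₂ fun s t => pathKernel_eq_sum_weightedSumKernel kA Chv Cd s.2 t
  rw [hsum]
  exact IsPSDKernel.sum _ fun k _ =>
    ((hA.weightedSumKernel _).comp Subtype.val).const_mul (by positivity)
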